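/- Let a ∈ (0,1) and R₀ ≥ 0. Suppose V ∈ C²((R₀,∞)) is positive and bounded with V'(r) < 0 on (R₀,∞) and V(r) → 0 as r → ∞, and suppose there exist R₁ > R₀ and a positive nonincreasing function f on (R₁,∞) with f(r) → 0 as r → ∞ such that 0 < r²V''(r) + a r V'(r) < f(r) for all r > R₁. Then r V'(r) → 0 as r → ∞; in particular V(r) + r|V'(r)| = o(1) as r → ∞. -/

import Mathlib

/-!
Put `W(r) = r^a V'(r)`. Then `W' = r^(a-2) (r²V'' + a r V')` lies in `(0, r^(a-2) f(r))`, so `W`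
increases, and since `f` is nonincreasing its total increase on `[r, ∞)` is at most
`∫_r^∞ f(r) t^(a-2) dt = f(r) r^(a-1) / (1-a)`. As `V` converges, the mean value theorem on
`[s, 2s]` produces points `ξ → ∞` with `ξ V'(ξ) → 0`, hence `W(ξ) → 0` because `a ≤ 1`. Therefore
`-f(r) r^(a-1) / (1-a) ≤ W(r) ≤ 0`, that is `-f(r) / (1-a) ≤ r V'(r) ≤ 0`, and `f(r) → 0`.
-/

open Set Filter Topology

theorem hasDerivAt_rpow_mul {g : ℝ → ℝ} {g' a r : ℝ} (hg : HasDerivAt g g' r) (hr : 0 < r) :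
    HasDerivAt (fun t => t ^ a * g t) (r ^ (a - 2) * (r ^ 2 * g' + a * r * g r)) r := by
  refine ((Real.hasDerivAt_rpow_const (p := a) (Or.inl hr.ne')).mul hg).congr_deriv ?_
  rw [Real.rpow_sub hr, Real.rpow_sub hr, Real.rpow_one, Real.rpow_two]
  field_simp
  ring

theorem sub_le_of_hasDerivAt_le_mul_rpow {W W' : ℝ → ℝ} {a c r s : ℝ} (ha : a < 1) (hc : 0 ≤ c)
    (hr : 0 < r) (hrs : r ≤ s) (hW : ∀ t ∈ Ici r, HasDerivAt W (W' t) t)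
    (hW' : ∀ t ∈ Ici r, W' t ≤ c * t ^ (a - 2)) :
    W s - W r ≤ c / (1 - a) * r ^ (a - 1) := by
  set ψ : ℝ → ℝ := fun t => W t + c / (1 - a) * t ^ (a - 1)
  have hψ : ∀ t ∈ Ici r, HasDerivAt ψ (W' t - c * t ^ (a - 2)) t := by
    intro t ht
    have ht0 : t ≠ 0 := (hr.trans_le ht).ne'
    refine ((hW t ht).add ((Real.hasDerivAt_rpow_const (p := a - 1) (Or.inl ht0)).const_mul
      (c / (1 - a)))).congr_deriv ?_
    rw [show a - 1 - 1 = a - 2 by ring]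
    field_simp [(sub_pos.2 ha).ne']
    ring
  have hanti : AntitoneOn ψ (Ici r) := by
    refine antitoneOn_of_hasDerivWithinAt_nonpos (f' := fun t => W' t - c * t ^ (a - 2))
      (convex_Ici r) (fun t ht => (hψ t ht).continuousAt.continuousWithinAt) (fun t ht => ?_)
      (fun t ht => ?_)
    · exact (hψ t (interior_subset ht)).hasDerivWithinAt
    · linarith [hW' t (interior_subset ht)]
  have hψrs : ψ s ≤ ψ r := hanti (mem_Ici.2 le_rfl) hrs hrs
  have htail : 0 ≤ c / (1 - a) * s ^ (a - 1) :=
    mul_nonneg (div_nonneg hc (sub_pos.2 ha).le) (Real.rpow_nonneg (hr.le.trans hrs) _)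
  simp only [ψ] at hψrs
  linarith

theorem frequently_abs_mul_deriv_lt {V : ℝ → ℝ} {L ε : ℝ}
    (hV : ∀ᶠ r in atTop, DifferentiableAt ℝ V r) (hlim : Tendsto V atTop (𝓝 L)) (hε : 0 < ε) :
    ∃ᶠ r in atTop, |r * deriv V r| < ε := by
  rw [frequently_atTop]
  intro R
  obtain ⟨R', hR'⟩ := eventually_atTop.1 hV
  have hgap : Tendsto (fun s => |V (2 * s) - V s|) atTop (𝓝 0) := by
    simpa using ((hlim.comp (tendsto_id.const_mul_atTop two_pos)).sub hlim).abs
  obtain ⟨s, hsε, hs⟩ := ((hgap.eventually (gt_mem_nhds (half_pos hε))).and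
    (eventually_ge_atTop (max (max R R') 1))).exists
  simp only [sup_le_iff] at hs
  have hs0 : 0 < s := by linarith
  have hdiff : ∀ t ∈ Icc s (2 * s), DifferentiableAt ℝ V t := fun t ht => hR' t (by linarith [ht.1])
  obtain ⟨ξ, hξ, hslope⟩ := exists_deriv_eq_slope V (by linarith : s < 2 * s)
    (fun t ht => (hdiff t ht).continuousAt.continuousWithinAt)
    (fun t ht => (hdiff t (Ioo_subset_Icc_self ht)).differentiableWithinAt)
  refine ⟨ξ, by linarith [hξ.1], ?_⟩
  have hξs : s * |deriv V ξ| = |V (2 * s) - V s| := by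
    rw [hslope, show 2 * s - s = s by ring, abs_div, abs_of_pos hs0]
    field_simp
  rw [abs_mul, abs_of_pos (hs0.trans hξ.1)]
  nlinarith [abs_nonneg (deriv V ξ), hξ.2]

theorem frequently_abs_rpow_mul_deriv_lt {V : ℝ → ℝ} {a L ε : ℝ} (ha : a ≤ 1)
    (hV : ∀ᶠ r in atTop, DifferentiableAt ℝ V r) (hlim : Tendsto V atTop (𝓝 L)) (hε : 0 < ε) :
    ∃ᶠ r in atTop, |r ^ a * deriv V r| < ε := by
  refine ((frequently_abs_mul_deriv_lt hV hlim hε).and_eventually (eventually_ge_atTop 1)).mono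
    fun r ⟨hrε, hr⟩ => lt_of_le_of_lt ?_ hrε
  rw [abs_mul, abs_mul, abs_of_nonneg (Real.rpow_nonneg (by linarith) _),
    abs_of_nonneg (by linarith : (0 : ℝ) ≤ r)]
  gcongr
  simpa using Real.rpow_le_rpow_of_exponent_le hr ha

theorem mem_Icc_of_frequently_abs_lt {W : ℝ → ℝ} {r C : ℝ}
    (hfreq : ∀ ε > 0, ∃ᶠ s in atTop, |W s| < ε) (hinc : ∀ s ∈ Ici r, W s - W r ∈ Icc 0 C) :
    W r ∈ Icc (-C) 0 := by
  have hε : ∀ ε > 0, -C - ε < W r ∧ W r < ε := by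
    intro ε hε
    obtain ⟨s, hsε, hs⟩ := ((hfreq ε hε).and_eventually (eventually_ge_atTop r)).exists
    have hincs := hinc s hs
    constructor <;> linarith [abs_lt.1 hsε, hincs.1, hincs.2]
  constructor
  · exact le_of_forall_pos_lt_add fun ε hε' => by linarith [(hε ε hε').1]
  · exact le_of_forall_pos_lt_add fun ε hε' => by linarith [(hε ε hε').2]

theorem rpow_mul_deriv_mem_Icc {V f : ℝ → ℝ} {a R L r : ℝ} (ha : a < 1) (hR : 0 < R)
    (hV : ∀ r ∈ Ioi R, DifferentiableAt ℝ V r)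
    (hV' : ∀ r ∈ Ioi R, DifferentiableAt ℝ (deriv V) r) (hlim : Tendsto V atTop (𝓝 L))
    (hfmono : ∀ r ∈ Ioi R, ∀ s ∈ Ioi R, r ≤ s → f s ≤ f r)
    (hineq : ∀ r ∈ Ioi R,
      0 < r ^ 2 * deriv (deriv V) r + a * r * deriv V r ∧
      r ^ 2 * deriv (deriv V) r + a * r * deriv V r < f r)
    (hr : r ∈ Ioi R) :
    r ^ a * deriv V r ∈ Icc (-(f r / (1 - a) * r ^ (a - 1))) 0 := by
  set W : ℝ → ℝ := fun t => t ^ a * deriv V t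
  set W' : ℝ → ℝ := fun t => t ^ (a - 2) * (t ^ 2 * deriv (deriv V) t + a * t * deriv V t)
  have hW : ∀ t ∈ Ioi R, HasDerivAt W (W' t) t := fun t ht =>
    hasDerivAt_rpow_mul (hV' t ht).hasDerivAt (hR.trans ht)
  have hWmono : MonotoneOn W (Ioi R) :=
    monotoneOn_of_hasDerivWithinAt_nonneg (f' := W') (convex_Ioi R)
      (fun t ht => (hW t ht).continuousAt.continuousWithinAt)
      (fun t ht => (hW t (interior_subset ht)).hasDerivWithinAt)
      (fun t ht => (mul_pos (Real.rpow_pos_of_pos (hR.trans (interior_subset ht)) _)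
        (hineq t (interior_subset ht)).1).le)
  have hW'le : ∀ t ∈ Ici r, W' t ≤ f r * t ^ (a - 2) := by
    intro t ht
    have htR : t ∈ Ioi R := Ici_subset_Ioi.2 hr ht
    rw [mul_comm]
    exact mul_le_mul_of_nonneg_left ((hineq t htR).2.le.trans (hfmono r hr t htR ht))
      (Real.rpow_nonneg (hR.trans htR).le _)
  refine mem_Icc_of_frequently_abs_lt (W := W)
    (fun ε hε => frequently_abs_rpow_mul_deriv_lt ha.le (eventually_gt_atTop R |>.mono hV) hlim hε)
    fun s hs => ⟨sub_nonneg.2 (hWmono hr (Ici_subset_Ioi.2 hr hs) hs), ?_⟩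
  exact sub_le_of_hasDerivAt_le_mul_rpow ha ((hineq r hr).1.trans (hineq r hr).2).le
    (hR.trans hr) hs (fun t ht => hW t (Ici_subset_Ioi.2 hr ht)) hW'le

theorem mul_mem_Icc_of_rpow_mul_mem_Icc {a c r y : ℝ} (hr : 0 < r)
    (h : r ^ a * y ∈ Icc (-(c * r ^ (a - 1))) 0) : r * y ∈ Icc (-c) 0 := by
  have hscale : r * y = r ^ (1 - a) * (r ^ a * y) := by
    rw [← mul_assoc, ← Real.rpow_add hr, sub_add_cancel, Real.rpow_one]
  have hr1a : r ^ (1 - a) * r ^ (a - 1) = 1 := by rw [← Real.rpow_add hr]; simp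
  rw [hscale]
  constructor
  · calc -c = r ^ (1 - a) * -(c * r ^ (a - 1)) := by linear_combination c * hr1a
      _ ≤ r ^ (1 - a) * (r ^ a * y) := by gcongr; exact h.1
  · exact mul_nonpos_of_nonneg_of_nonpos (by positivity) h.2

theorem stmt17_general (a R₀ R₁ : ℝ) (ha1 : a < 1) (hR₀ : 0 ≤ R₀) (hR₁ : R₀ < R₁)
    (V f : ℝ → ℝ)
    (hV : ContDiffOn ℝ 2 V (Ioi R₀))
    (hlim : Tendsto V atTop (nhds 0))
    (hfmono : ∀ r ∈ Ioi R₁, ∀ s ∈ Ioi R₁, r ≤ s → f s ≤ f r)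
    (hflim : Tendsto f atTop (nhds 0))
    (hineq : ∀ r ∈ Ioi R₁,
      0 < r ^ 2 * deriv (deriv V) r + a * r * deriv V r ∧
      r ^ 2 * deriv (deriv V) r + a * r * deriv V r < f r) :
    Tendsto (fun r => r * deriv V r) atTop (nhds 0) ∧
    Tendsto (fun r => V r + r * |deriv V r|) atTop (nhds 0) := by
  have hR₁pos : 0 < R₁ := hR₀.trans_lt hR₁
  have hsub : Ioi R₁ ⊆ Ioi R₀ := Ioi_subset_Ioi hR₁.le
  have hdiff : ∀ r ∈ Ioi R₁, DifferentiableAt ℝ V r := fun r hr =>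
    (hV.differentiableOn two_ne_zero r (hsub hr)).differentiableAt (isOpen_Ioi.mem_nhds (hsub hr))
  have hV' : ContDiffOn ℝ 1 (deriv V) (Ioi R₀) := hV.deriv_of_isOpen isOpen_Ioi (by norm_num)
  have hdiff' : ∀ r ∈ Ioi R₁, DifferentiableAt ℝ (deriv V) r := fun r hr =>
    (hV'.differentiableOn one_ne_zero r (hsub hr)).differentiableAt (isOpen_Ioi.mem_nhds (hsub hr))
  have hbound : ∀ᶠ r in atTop, r * deriv V r ∈ Icc (-(f r / (1 - a))) 0 :=
    (eventually_gt_atTop R₁).mono fun r hr =>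
      mul_mem_Icc_of_rpow_mul_mem_Icc (hR₁pos.trans hr)
        (rpow_mul_deriv_mem_Icc ha1 hR₁pos hdiff hdiff' hlim hfmono hineq hr)
  have hmain : Tendsto (fun r => r * deriv V r) atTop (nhds 0) :=
    tendsto_of_tendsto_of_tendsto_of_le_of_le' (by simpa using (hflim.div_const (1 - a)).neg)
      tendsto_const_nhds (hbound.mono fun _ h => h.1) (hbound.mono fun _ h => h.2)
  have hsum : Tendsto (fun r => V r + |r * deriv V r|) atTop (nhds 0) := by
    simpa using hlim.add hmain.abs
  refine ⟨hmain, hsum.congr' ?_⟩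
  filter_upwards [eventually_gt_atTop 0] with r hr
  rw [abs_mul, abs_of_pos hr]

/-- ODE decay lemma: if `V ∈ C²((R₀,∞))` is positive, bounded, strictly decreasing
(`V' < 0`) with `V(r) → 0`, and there are `R₁ > R₀` and a positive nonincreasing
function `f` on `(R₁,∞)` with `f(r) → 0` such that `0 < r²V'' + a r V' < f(r)` for
`r > R₁` (where `a ∈ (0,1)`), then `r V'(r) → 0` as `r → ∞`; in particular
`V(r) + r|V'(r)| = o(1)` as `r → ∞`. -/
theorem stmt17 (a R₀ R₁ : ℝ) (ha0 : 0 < a) (ha1 : a < 1) (hR₀ : 0 ≤ R₀) (hR₁ : R₀ < R₁)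
    (V f : ℝ → ℝ)
    (hV : ContDiffOn ℝ 2 V (Ioi R₀))
    (hpos : ∀ r ∈ Ioi R₀, 0 < V r)
    (hbdd : ∃ M : ℝ, ∀ r ∈ Ioi R₀, V r ≤ M)
    (hdec : ∀ r ∈ Ioi R₀, deriv V r < 0)
    (hlim : Tendsto V atTop (nhds 0))
    (hfpos : ∀ r ∈ Ioi R₁, 0 < f r)
    (hfmono : ∀ r ∈ Ioi R₁, ∀ s ∈ Ioi R₁, r ≤ s → f s ≤ f r)
    (hflim : Tendsto f atTop (nhds 0))
    (hineq : ∀ r ∈ Ioi R₁,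
      0 < r ^ 2 * deriv (deriv V) r + a * r * deriv V r ∧
      r ^ 2 * deriv (deriv V) r + a * r * deriv V r < f r) :
    Tendsto (fun r => r * deriv V r) atTop (nhds 0) ∧
    Tendsto (fun r => V r + r * |deriv V r|) atTop (nhds 0) :=
  stmt17_general a R₀ R₁ ha1 hR₀ hR₁ V f hV hlim hfmono hflim hineq
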